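/- arXiv:2108.08835 — 4 statements merged into one kernel-verified Lean document; each statement's English description precedes it below -/
import Mathlib

section
/- Let n : ℕ and let i, j, k : Fin n with i < k and k ≤ j. Then conjugating the Pauli operator Z_k by the product of string operators m_i and m_j flips its sign: (m_i ∘ m_j) ∘ Z_k ∘ (m_i ∘ m_j) = −Z_k as linear endomorphisms of H_n. (This is the double braiding of the e-sector and the m-sector of symmetric operators in the Ising chain.) -/
/-- The state space of the `n`-site spin chain. -/
abbrev SpinChain (n : ℕ) := (Fin n → Bool) → ℂ

/-- The Pauli operator `X_i`, flipping the `i`-th bit. -/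
noncomputable def PauliX (n : ℕ) (i : Fin n) : Module.End ℂ (SpinChain n) where
  toFun ψ := fun t => ψ (Function.update t i (!(t i)))
  map_add' _ _ := rfl
  map_smul' _ _ := rfl

/-- The Pauli operator `Z_i`. -/
noncomputable def PauliZ (n : ℕ) (i : Fin n) : Module.End ℂ (SpinChain n) where
  toFun ψ := fun t => (if t i then (-1 : ℂ) else 1) * ψ t
  map_add' ψ φ := by funext t; simp [mul_add]
  map_smul' c ψ := by
    funext t
    simp only [Pi.smul_apply, smul_eq_mul, RingHom.id_apply]
    ring

lemma pauliX_comm (n : ℕ) (a b : Fin n) : Commute (PauliX n a) (PauliX n b) := by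
  rcases eq_or_ne a b with rfl | h
  · exact Commute.refl _
  · refine LinearMap.ext fun ψ => funext fun t => ?_
    show (PauliX n a) ((PauliX n b) ψ) t = (PauliX n b) ((PauliX n a) ψ) t
    simp only [PauliX, LinearMap.coe_mk, AddHom.coe_mk]
    rw [Function.update_of_ne h, Function.update_of_ne h.symm,
      Function.update_comm h]

/-- The string operator `m_i = ∏_{k ≤ i} X_k`, the composite (in any order) of the
pairwise commuting operators `X_k` for `k ≤ i`. -/
noncomputable def stringM (n : ℕ) (i : Fin n) : Module.End ℂ (SpinChain n) :=
  (Finset.univ.filter (· ≤ i)).noncommProd (PauliX n)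
    (fun a _ b _ _ => pauliX_comm n a b)

/-- The global spin flip `U = ∏_{k} X_k`. -/
noncomputable def globalU (n : ℕ) : Module.End ℂ (SpinChain n) :=
  Finset.univ.noncommProd (PauliX n)
    (fun a _ b _ _ => pauliX_comm n a b)

lemma pauliX_sq (n : ℕ) (a : Fin n) : PauliX n a * PauliX n a = 1 := by
  refine LinearMap.ext fun ψ => funext fun t => ?_
  show (PauliX n a) ((PauliX n a) ψ) t = ψ t
  simp [PauliX, Function.update_idem]

lemma pauliXZ_comm (n : ℕ) (a k : Fin n) (h : a ≠ k) :
    Commute (PauliX n a) (PauliZ n k) := by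
  refine LinearMap.ext fun ψ => funext fun t => ?_
  show (PauliX n a) ((PauliZ n k) ψ) t = (PauliZ n k) ((PauliX n a) ψ) t
  simp only [PauliX, PauliZ, LinearMap.coe_mk, AddHom.coe_mk]
  rw [Function.update_of_ne (Ne.symm h)]

lemma pauliXZ_anticomm (n : ℕ) (k : Fin n) :
    PauliX n k * PauliZ n k = -(PauliZ n k * PauliX n k) := by
  refine LinearMap.ext fun ψ => funext fun t => ?_
  show (PauliX n k) ((PauliZ n k) ψ) t = -((PauliZ n k) ((PauliX n k) ψ) t)
  simp only [PauliX, PauliZ, LinearMap.coe_mk, AddHom.coe_mk, Function.update_self]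
  cases t k <;> simp

lemma end_neg_mul {n : ℕ} (f g : Module.End ℂ (SpinChain n)) : -f * g = -(f * g) := rfl

lemma end_mul_neg {n : ℕ} (f g : Module.End ℂ (SpinChain n)) : f * -g = -(f * g) := by
  refine LinearMap.ext fun ψ => ?_
  simp [Module.End.mul_apply]

lemma mul_sq_one {R : Type*} [Monoid R] (x p : R) (h : Commute x p)
    (hx : x * x = 1) (hp : p * p = 1) : (x * p) * (x * p) = 1 := by
  rw [mul_assoc, ← mul_assoc p x p, ← h.eq, mul_assoc x p p, hp, mul_one, hx]

lemma prodX_sq (n : ℕ) (S : Finset (Fin n)) :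
    S.noncommProd (PauliX n) (fun a _ b _ _ => pauliX_comm n a b) *
      S.noncommProd (PauliX n) (fun a _ b _ _ => pauliX_comm n a b) = 1 := by
  induction S using Finset.cons_induction with
  | empty => erw [Finset.noncommProd_empty, mul_one]
  | cons a S ha ih =>
    erw [Finset.noncommProd_cons]
    exact mul_sq_one _ _
      (Finset.noncommProd_commute _ _ _ _ (fun x _ => pauliX_comm n a x))
      (pauliX_sq n a) ih

lemma prodX_Z (n : ℕ) (k : Fin n) (S : Finset (Fin n)) :
    S.noncommProd (PauliX n) (fun a _ b _ _ => pauliX_comm n a b) * PauliZ n k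
    = if k ∈ S then
        -(PauliZ n k * S.noncommProd (PauliX n) (fun a _ b _ _ => pauliX_comm n a b))
      else
        PauliZ n k * S.noncommProd (PauliX n) (fun a _ b _ _ => pauliX_comm n a b) := by
  induction S using Finset.cons_induction with
  | empty => erw [Finset.noncommProd_empty]; simp
  | cons a S ha ih =>
    erw [Finset.noncommProd_cons]
    rw [mul_assoc, ih]
    rcases eq_or_ne a k with rfl | h
    · rw [if_neg ha, if_pos (Finset.mem_cons_self a S), ← mul_assoc, pauliXZ_anticomm,
        end_neg_mul, mul_assoc]
    · by_cases hks : k ∈ S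
      · rw [if_pos hks, if_pos (Finset.mem_cons.mpr (Or.inr hks)), end_mul_neg,
          ← mul_assoc, (pauliXZ_comm n a k h).eq, mul_assoc]
      · rw [if_neg hks, if_neg (by simp [Finset.mem_cons, h.symm, hks]),
          ← mul_assoc, (pauliXZ_comm n a k h).eq, mul_assoc]

lemma conj_neg {n : ℕ} (a b z : Module.End ℂ (SpinChain n))
    (haz : a * z = z * a) (hbz : b * z = -(z * b)) (hab : a * b = b * a)
    (ha : a * a = 1) (hb : b * b = 1) : (a * b) * z * (a * b) = -z := by
  have h1 : (a * b) * z = -(z * (a * b)) := by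
    rw [mul_assoc, hbz, end_mul_neg, ← mul_assoc, haz, mul_assoc]
  have h2 : (a * b) * (a * b) = 1 := by
    rw [mul_assoc, ← mul_assoc b a b, ← hab, mul_assoc a b b, hb, mul_one, ha]
  rw [h1, end_neg_mul, mul_assoc, h2, mul_one]

/-- Conjugating `Z_k` by `m_i ∘ m_j` (with `i < k ≤ j`) flips its sign: the double
braiding of the `e`- and `m`-sectors of symmetric operators in the Ising chain. -/
theorem string_conj_pauliZ_eq_neg (n : ℕ) (i j k : Fin n) (hik : i < k) (hkj : k ≤ j) :
    (stringM n i * stringM n j) * PauliZ n k * (stringM n i * stringM n j)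
      = - PauliZ n k := by
  have hki : k ∉ Finset.univ.filter (· ≤ i) := by simp [not_le.mpr hik]
  have hkjm : k ∈ Finset.univ.filter (· ≤ j) := by simp [hkj]
  unfold stringM
  have haz := prodX_Z n k (Finset.univ.filter (· ≤ i))
  rw [if_neg hki] at haz
  have hbz := prodX_Z n k (Finset.univ.filter (· ≤ j))
  rw [if_pos hkjm] at hbz
  have hab := (Finset.noncommProd_commute
      (Finset.univ.filter (· ≤ j)) (PauliX n) (fun a _ b _ _ => pauliX_comm n a b)
      ((Finset.univ.filter (· ≤ i)).noncommProd (PauliX n)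
        (fun a _ b _ _ => pauliX_comm n a b))
      (fun x _ => (Finset.noncommProd_commute _ _ _ _
        (fun y _ => pauliX_comm n x y)).symm)).symm.eq
  exact conj_neg _ _ _ haz hbz hab.symm (prodX_sq n _) (prodX_sq n _)
end

section
/- Let n : ℕ and let i, j, k : Fin n with i ≤ k and k < j. Then conjugating the string operator m_k by the product Z_i ∘ Z_j flips its sign: (Z_i ∘ Z_j) ∘ m_k ∘ (Z_i ∘ Z_j) = −m_k as linear endomorphisms of H_n. (This is the double braiding of the m-sector and the e-sector of symmetric operators in the Ising chain.) -/
lemma noncommProd_pauliX_apply (n : ℕ) (S : Finset (Fin n)) (ψ : SpinChain n)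
    (t : Fin n → Bool) :
    (S.noncommProd (PauliX n) (fun a _ b _ _ => pauliX_comm n a b)) ψ t
      = ψ (fun x => if x ∈ S then !(t x) else t x) := by
  classical
  induction S using Finset.cons_induction generalizing t with
  | empty =>
    rw [show (∅ : Finset (Fin n)).noncommProd (PauliX n) (fun a _ b _ _ => pauliX_comm n a b) = 1
      from Finset.noncommProd_empty _ _]
    simp [Finset.noncommProd_empty]
  | cons a S ha ih =>
    rw [show (Finset.cons a S ha).noncommProd (PauliX n) (fun a _ b _ _ => pauliX_comm n a b)
      = PauliX n a * S.noncommProd (PauliX n) (fun a _ b _ _ => pauliX_comm n a b)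
      from Finset.noncommProd_cons _ _ _ _ _]
    refine (ih (Function.update t a (!(t a)))).trans ?_
    congr 1
    funext x
    rcases eq_or_ne x a with rfl | hx
    · simp [ha]
    · simp [Function.update_of_ne hx, hx, Finset.mem_cons]

/-- Conjugating the string operator `m_k` by `Z_i ∘ Z_j` (with `i ≤ k < j`) flips its
sign: the double braiding of the `m`- and `e`-sectors of symmetric operators. -/
theorem pauliZ_conj_string_eq_neg (n : ℕ) (i j k : Fin n) (hik : i ≤ k) (hkj : k < j) :
    (PauliZ n i * PauliZ n j) * stringM n k * (PauliZ n i * PauliZ n j)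
      = - stringM n k := by
  refine LinearMap.ext fun ψ => funext fun t => ?_
  show (PauliZ n i) ((PauliZ n j) ((stringM n k) ((PauliZ n i) ((PauliZ n j) ψ)))) t
    = -((stringM n k) ψ) t
  simp only [PauliZ, LinearMap.coe_mk, AddHom.coe_mk, stringM]
  rw [noncommProd_pauliX_apply, noncommProd_pauliX_apply]
  have hi : i ∈ Finset.univ.filter (· ≤ k) := by simp [hik]
  have hj : j ∉ Finset.univ.filter (· ≤ k) := by simp [not_le.mpr hkj]
  simp only [Finset.mem_filter, Finset.mem_univ, true_and]
  rw [if_pos hik, if_neg (not_le.mpr hkj)]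
  rcases t i <;> rcases t j <;> simp
end

section
/- Let n : ℕ with n ≥ 2 and let H_J := −∑_{i=0}^{n−2} Z_i ∘ Z_{i+1} be the open Ising chain Hamiltonian at B = 0. For every configuration t : Fin n → Bool, the basis vector δ_t is an eigenvector of H_J with eigenvalue 2·dw(t) − (n−1), where dw(t) := |{i : 0 ≤ i ≤ n−2, t i ≠ t (i+1)}| is the number of domain walls of t. Moreover, the eigenspace of H_J for the lowest eigenvalue −(n−1) is exactly the two-dimensional span of δ_{const false} and δ_{const true}. -/
/-- For the open Ising chain at `B = 0`, each basis vector `δ_t` is an eigenvector with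
eigenvalue `2·dw(t) - (n-1)`, where `dw t` counts the domain walls of `t`; and the lowest
eigenspace (eigenvalue `-(n-1)`) is exactly the two-dimensional span of `δ_{const false}`
and `δ_{const true}`. -/
theorem ising_B_eq_zero_spectrum (n : ℕ) (hn : 2 ≤ n)
    (HJ : Module.End ℂ (SpinChain n))
    (hHJ : HJ = -∑ i ∈ (Finset.range (n - 1)).attach,
        PauliZ n ⟨i.1, by have := Finset.mem_range.mp i.2; omega⟩ *
        PauliZ n ⟨i.1 + 1, by have := Finset.mem_range.mp i.2; omega⟩)
    (δ : (Fin n → Bool) → SpinChain n)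
    (hδ : ∀ t t', δ t t' = if t' = t then 1 else 0)
    (dw : (Fin n → Bool) → ℕ)
    (hdw : ∀ t, dw t = ((Finset.range (n - 1)).attach.filter
        (fun i => t ⟨i.1, by have := Finset.mem_range.mp i.2; omega⟩ ≠
          t ⟨i.1 + 1, by have := Finset.mem_range.mp i.2; omega⟩)).card) :
    (∀ t, Module.End.HasEigenvector HJ (2 * (dw t : ℂ) - ((n : ℂ) - 1)) (δ t)) ∧
    Module.End.eigenspace HJ (-((n : ℂ) - 1)) =
      Submodule.span ℂ {δ (fun _ => false), δ (fun _ => true)} ∧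
    Module.finrank ℂ (Module.End.eigenspace HJ (-((n : ℂ) - 1))) = 2 := by
  have hcf : (fun _ => false : Fin n → Bool) ≠ (fun _ => true) := by
    intro h
    exact Bool.false_ne_true (congrFun h ⟨0, by omega⟩)
  -- sum of ±1 formula
  have sum_pm : ∀ {α : Type} (S : Finset α) (P : α → Prop) [DecidablePred P],
      ∑ i ∈ S, (if P i then (-1 : ℂ) else 1)
        = (S.card : ℂ) - 2 * ((S.filter P).card : ℂ) := by
    intro α S P _
    have : ∀ i, (if P i then (-1 : ℂ) else 1) = 1 - 2 * (if P i then 1 else 0) := by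
      intro i; split <;> ring
    simp only [this]
    rw [Finset.sum_sub_distrib, Finset.sum_const, ← Finset.mul_sum, Finset.sum_boole]
    simp
  -- diagonal action of HJ
  have key : ∀ (ψ : SpinChain n) (t : Fin n → Bool),
      HJ ψ t = (2 * (dw t : ℂ) - ((n : ℂ) - 1)) * ψ t := by
    intro ψ t
    have step : ∀ (a b : Fin n),
        ((PauliZ n a * PauliZ n b) ψ) t = (if t a ≠ t b then (-1 : ℂ) else 1) * ψ t := by
      intro a b
      show (PauliZ n a) ((PauliZ n b) ψ) t = _
      simp only [PauliZ, LinearMap.coe_mk, AddHom.coe_mk]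
      cases h1 : t a <;> cases h2 : t b <;> simp <;> ring
    rw [hHJ]
    simp only [LinearMap.neg_apply, LinearMap.coe_sum, Finset.sum_apply, Pi.neg_apply]
    have hcard : (((Finset.range (n-1)).attach.card : ℂ)) = (n : ℂ) - 1 := by
      rw [Finset.card_attach, Finset.card_range]
      push_cast [Nat.cast_sub (by omega : 1 ≤ n)]
      ring
    rw [Finset.sum_congr rfl (fun i _ => step _ _), ← Finset.sum_mul, sum_pm, ← hdw t, hcard]
    ring
  -- delta is nonzero
  have hδne : ∀ t, δ t ≠ 0 := by
    intro t h
    have := congrFun h t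
    rw [hδ] at this
    simp at this
  -- part 1
  have part1 : ∀ t, Module.End.HasEigenvector HJ (2 * (dw t : ℂ) - ((n : ℂ) - 1)) (δ t) := by
    intro t
    refine ⟨Module.End.mem_eigenspace_iff.mpr ?_, hδne t⟩
    funext t'
    rw [Pi.smul_apply, key, hδ, smul_eq_mul]
    by_cases h : t' = t
    · subst h; rfl
    · simp [h]
  -- dw = 0 iff constant
  have const_iff : ∀ t : Fin n → Bool,
      dw t = 0 ↔ (t = fun _ => false) ∨ (t = fun _ => true) := by
    intro t
    constructor
    · intro h
      rw [hdw t, Finset.card_eq_zero, Finset.filter_eq_empty_iff] at h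
      have hstep : ∀ (i : ℕ) (hi : i < n - 1),
          t ⟨i, by omega⟩ = t ⟨i + 1, by omega⟩ := by
        intro i hi
        exact not_not.mp (h (Finset.mem_attach _ ⟨i, Finset.mem_range.mpr hi⟩))
      have hall : ∀ (j : ℕ) (hj : j < n), t ⟨j, hj⟩ = t ⟨0, by omega⟩ := by
        intro j
        induction j with
        | zero => intro _; rfl
        | succ k ih =>
          intro hj
          rw [← hstep k (by omega)]
          exact ih (by omega)
      cases h0 : t ⟨0, by omega⟩
      · left; funext j; rw [show j = ⟨j.1, j.2⟩ from rfl, hall j.1 j.2, h0]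
      · right; funext j; rw [show j = ⟨j.1, j.2⟩ from rfl, hall j.1 j.2, h0]
    · intro h
      rw [hdw t, Finset.card_eq_zero, Finset.filter_eq_empty_iff]
      intro i _
      rcases h with h | h <;> subst h <;> simp
  -- membership characterization of eigenspace
  have memiff : ∀ ψ : SpinChain n,
      ψ ∈ Module.End.eigenspace HJ (-((n : ℂ) - 1)) ↔ ∀ t, dw t ≠ 0 → ψ t = 0 := by
    intro ψ
    rw [Module.End.mem_eigenspace_iff]
    constructor
    · intro h t ht
      have := congrFun h t
      rw [key, Pi.smul_apply, smul_eq_mul] at this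
      have h2 : (2 * (dw t : ℂ)) * ψ t = 0 := by linear_combination this
      rcases mul_eq_zero.mp h2 with h3 | h3
      · exfalso
        have : (dw t : ℂ) ≠ 0 := Nat.cast_ne_zero.mpr ht
        simp [this] at h3
      · exact h3
    · intro h
      funext t
      rw [key, Pi.smul_apply, smul_eq_mul]
      by_cases ht : dw t = 0
      · rw [ht]; push_cast; ring
      · rw [h t ht]; ring
  have part2 : Module.End.eigenspace HJ (-((n : ℂ) - 1)) =
      Submodule.span ℂ {δ (fun _ => false), δ (fun _ => true)} := by
    apply le_antisymm
    · intro ψ hψ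
      rw [Submodule.mem_span_pair]
      refine ⟨ψ (fun _ => false), ψ (fun _ => true), ?_⟩
      funext t
      rw [Pi.add_apply, Pi.smul_apply, Pi.smul_apply, smul_eq_mul, smul_eq_mul, hδ, hδ]
      by_cases h0 : t = fun _ => false
      · subst h0; simp [hcf]
      · by_cases h1 : t = fun _ => true
        · subst h1; simp [Ne.symm hcf]
        · have : dw t ≠ 0 := by
            intro h
            rcases (const_iff t).mp h with h | h
            · exact h0 h
            · exact h1 h
          rw [(memiff ψ).mp hψ t this]
          simp [h0, h1]
    · rw [Submodule.span_le]
      rintro x (rfl | rfl)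
      · have := (part1 (fun _ => false)).1
        have h0 : dw (fun _ : Fin n => false) = 0 := (const_iff _).mpr (Or.inl rfl)
        rw [h0] at this
        simpa using this
      · have := (part1 (fun _ => true)).1
        have h0 : dw (fun _ : Fin n => true) = 0 := (const_iff _).mpr (Or.inr rfl)
        rw [h0] at this
        simpa using this
  refine ⟨part1, part2, ?_⟩
  rw [part2]
  have hind : LinearIndependent ℂ ![δ (fun _ => false), δ (fun _ => true)] := by
    rw [LinearIndependent.pair_iff]
    intro s r hsr
    constructor
    · have := congrFun hsr (fun _ => false)
      rw [Pi.add_apply, Pi.smul_apply, Pi.smul_apply, smul_eq_mul, smul_eq_mul, hδ, hδ] at this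
      simpa [hcf] using this
    · have := congrFun hsr (fun _ => true)
      rw [Pi.add_apply, Pi.smul_apply, Pi.smul_apply, smul_eq_mul, smul_eq_mul, hδ, hδ] at this
      simpa [Ne.symm hcf] using this
  have hrange : ({δ (fun _ => false), δ (fun _ => true)} : Set (SpinChain n))
      = Set.range ![δ (fun _ => false), δ (fun _ => true)] := by
    ext x
    simp [Matrix.range_cons]
    tauto
  rw [hrange, finrank_span_eq_card hind]
  simp
end

section
/- The Drinfeld (monoidal) center of the category FdRep ℂ (ZMod 2) of finite-dimensional complex representations of ℤ₂ has exactly four isomorphism classes of simple objects: there exist simple objects X₀, X₁, X₂, X₃ of Center (FdRep ℂ (ZMod 2)) that are pairwise non-isomorphic, such that every simple object of Center (FdRep ℂ (ZMod 2)) is isomorphic to one of them. (These four classes are the sectors 𝟙, e, m, f of ℤ₂-symmetric operators, i.e. the anyons of the toric code.) -/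
open CategoryTheory MonoidalCategory Limits

/-- The Drinfeld center of a monoidally preadditive category has zero morphisms. -/
noncomputable instance centerHasZeroMorphisms {C : Type*} [Category C] [Preadditive C]
    [MonoidalCategory C] [MonoidalPreadditive C] :
    HasZeroMorphisms (Center C) where
  zero X Y := ⟨{ f := (0 : X.1 ⟶ Y.1), comm := fun U => by simp }⟩
  comp_zero f Z := by apply Center.ext; show f.f ≫ 0 = 0; simp
  zero_comp X {Y Z} g := by apply Center.ext; show 0 ≫ g.f = 0; simp

namespace ToricAux
abbrev G2 := Multiplicative (ZMod 2)
abbrev CC := FDRep ℂ G2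
noncomputable section
def gg : G2 := Multiplicative.ofAdd (1 : ZMod 2)
lemma zmod2_cases : ∀ z : ZMod 2, z = 0 ∨ z = 1 := by decide
lemma gg_gg : gg * gg = 1 := by decide

def sgn (a : Bool) (x : G2) : ℂ := if a ∧ x.toAdd = 1 then -1 else 1
lemma sgn_one (a : Bool) : sgn a 1 = 1 := by cases a <;> rfl
lemma sgn_mul (a : Bool) (x y : G2) : sgn a (x * y) = sgn a x * sgn a y := by
  cases a
  · simp [sgn]
  · rcases zmod2_cases x.toAdd with hx | hx <;> rcases zmod2_cases y.toAdd with hy | hy <;>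
      simp [sgn, toAdd_mul, hx, hy]
lemma sgn_gg (a : Bool) : sgn a gg = if a then -1 else 1 := by cases a <;> rfl

def rrep (a : Bool) : Representation ℂ G2 ℂ where
  toFun x := sgn a x • LinearMap.id
  map_one' := by simp [sgn_one]; rfl
  map_mul' x y := by
    ext c : 1
    simp [sgn_mul, mul_smul, mul_comm]

def Xrep (a : Bool) : CC := FDRep.of (rrep a)
lemma Xrep_ρ (a : Bool) (x : G2) (c : ℂ) : ((Xrep a).ρ x) c = sgn a x * c := by
  show sgn a x • c = _; rw [smul_eq_mul]

lemma ρ_hom_comm_apply {U U' : CC} (f : U ⟶ U') (x : G2) (u : U.V) :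
    f.hom (U.ρ x u) = U'.ρ x (f.hom u) :=
  congrFun (congrArg (fun (g : U.V ⟶ U'.V) => (g : U.V → U'.V)) (f.comm x)) u

lemma tau_tau (U : CC) (u : U.V) : U.ρ gg (U.ρ gg u) = u := by
  rw [← Module.End.mul_apply, ← map_mul, gg_gg, map_one, Module.End.one_apply]

/-- twist by the generator, or not -/
def tw (b : Bool) (U : CC) : U.V →ₗ[ℂ] U.V := if b then U.ρ gg else LinearMap.id

lemma tw_comm {U U' : CC} (b : Bool) (f : U ⟶ U') (u : U.V) :
    f.hom (tw b U u) = tw b U' (f.hom u) := by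
  cases b
  · rfl
  · exact ρ_hom_comm_apply f gg u

/-- the twist as a morphism in `CC` -/
def twHom (b : Bool) (U : CC) : U ⟶ U where
  hom := ObjectProperty.homMk (ModuleCat.ofHom (tw b U))
  comm x := by
    ext u
    show tw b U (U.ρ x u) = U.ρ x (tw b U u)
    cases b
    · rfl
    · show U.ρ gg (U.ρ x u) = U.ρ x (U.ρ gg u)
      rw [← Module.End.mul_apply, ← Module.End.mul_apply, ← map_mul, ← map_mul, mul_comm]

lemma tw_tw (b : Bool) (U : CC) (u : U.V) : tw b U (tw b U u) = u := by
  cases b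
  · rfl
  · exact tau_tau U u

/-- the twist as an isomorphism -/
def twIso (b : Bool) (U : CC) : U ≅ U where
  hom := twHom b U
  inv := twHom b U
  hom_inv_id := by ext u; exact tw_tw b U u
  inv_hom_id := by ext u; exact tw_tw b U u

/-- The four central objects. -/
def Xobj (a b : Bool) : Center CC :=
  ⟨Xrep a,
   { β := fun U => whiskerLeftIso (Xrep a) (twIso b U) ≪≫ β_ (Xrep a) U
     monoidal := fun U U' => by
       apply Action.Hom.ext
       apply FGModuleCat.hom_ext
       apply TensorProduct.ext'
       intro v w
       show (β_ (Xrep a) (U ⊗ U')).hom.hom (v ⊗ₜ (tw b (U ⊗ U') w)) = _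
       induction w using TensorProduct.induction_on with
       | zero => simp
       | add x y hx hy =>
           simp only [map_add, TensorProduct.tmul_add] at hx hy ⊢
           rw [hx, hy]
       | tmul u u' =>
           cases b
           · rfl
           · rfl
     naturality := fun {U U'} f => by
       apply Action.Hom.ext
       apply FGModuleCat.hom_ext
       apply TensorProduct.ext'
       intro v u
       show (tw b U' (f.hom u)) ⊗ₜ[ℂ] v = (f.hom (tw b U u)) ⊗ₜ[ℂ] v
       rw [tw_comm] }⟩

lemma Xobj_β_apply (a b : Bool) (U : CC) (v : ℂ) (u : U.V) :
    ((Xobj a b).2.β U).hom.hom (v ⊗ₜ u) = (tw b U u) ⊗ₜ[ℂ] v := rfl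

lemma sgn_sq (a : Bool) (x : G2) : sgn a x * sgn a x = 1 := by
  cases a
  · simp [sgn]
  · rcases zmod2_cases x.toAdd with hx | hx <;> simp [sgn, hx]

lemma comp_hom_apply {X Y Z : CC} (f : X ⟶ Y) (g : Y ⟶ Z) (x : X.V) :
    (f ≫ g).hom x = g.hom (f.hom x) := rfl

variable (Y : Center CC)

/-- The operator on the underlying space given by the half-braiding against the sign rep. -/
def TY : Y.1.V →ₗ[ℂ] Y.1.V :=
  (TensorProduct.lid ℂ Y.1.V).toLinearMap ∘ₗ (Y.2.β (Xrep true)).hom.hom.hom.hom ∘ₗ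
    (TensorProduct.rid ℂ Y.1.V).symm.toLinearMap

lemma beta_sgn_apply (v : Y.1.V) :
    (Y.2.β (Xrep true)).hom.hom (v ⊗ₜ (1 : ℂ)) = (1 : ℂ) ⊗ₜ[ℂ] TY Y v := by
  have h0 : ((TensorProduct.rid ℂ Y.1.V).symm v : TensorProduct ℂ Y.1.V ℂ) = v ⊗ₜ 1 :=
    TensorProduct.rid_symm_apply v
  have h : TY Y v = TensorProduct.lid ℂ Y.1.V ((Y.2.β (Xrep true)).hom.hom (v ⊗ₜ (1 : ℂ))) := by
    rw [show TY Y v = TensorProduct.lid ℂ Y.1.V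
      ((Y.2.β (Xrep true)).hom.hom ((TensorProduct.rid ℂ Y.1.V).symm v)) from rfl, h0]
    rfl
  rw [h]
  conv_lhs => rw [← (TensorProduct.lid ℂ Y.1.V).symm_apply_apply
    ((Y.2.β (Xrep true)).hom.hom (v ⊗ₜ (1 : ℂ)))]
  rw [TensorProduct.lid_symm_apply]

/-- The operator from the half-braiding against the tensor unit. -/
def LY : Y.1.V →ₗ[ℂ] Y.1.V :=
  (TensorProduct.lid ℂ Y.1.V).toLinearMap ∘ₗ (Y.2.β (𝟙_ CC)).hom.hom.hom.hom ∘ₗ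
    (TensorProduct.rid ℂ Y.1.V).symm.toLinearMap

lemma beta_unit_apply' (v : Y.1.V) :
    (Y.2.β (𝟙_ CC)).hom.hom (v ⊗ₜ (1 : ℂ)) = (1 : ℂ) ⊗ₜ[ℂ] LY Y v := by
  have h0 : ((TensorProduct.rid ℂ Y.1.V).symm v : TensorProduct ℂ Y.1.V ℂ) = v ⊗ₜ 1 :=
    TensorProduct.rid_symm_apply v
  have h : LY Y v = TensorProduct.lid ℂ Y.1.V ((Y.2.β (𝟙_ CC)).hom.hom (v ⊗ₜ (1 : ℂ))) := by
    rw [show LY Y v = TensorProduct.lid ℂ Y.1.V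
      ((Y.2.β (𝟙_ CC)).hom.hom ((TensorProduct.rid ℂ Y.1.V).symm v)) from rfl, h0]
  rw [h]
  conv_lhs => rw [← (TensorProduct.lid ℂ Y.1.V).symm_apply_apply
    ((Y.2.β (𝟙_ CC)).hom.hom (v ⊗ₜ (1 : ℂ)))]
  rw [TensorProduct.lid_symm_apply]

lemma beta_injective (U : CC) : Function.Injective (Y.2.β U).hom.hom.hom.hom := by
  have key : ∀ x, (Y.2.β U).inv.hom ((Y.2.β U).hom.hom x) = x := fun x =>
    congrArg (fun (f : Y.1 ⊗ U ⟶ Y.1 ⊗ U) => f.hom x) (Y.2.β U).hom_inv_id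
  intro a b h
  rw [← key a, ← key b]; exact congrArg (fun x => (Y.2.β U).inv.hom x) h

lemma LY_idem (v : Y.1.V) : LY Y (LY Y v) = LY Y v := by
  have hmon := congrArg
    (fun (f : Y.1 ⊗ (𝟙_ CC ⊗ 𝟙_ CC) ⟶ (𝟙_ CC ⊗ 𝟙_ CC) ⊗ Y.1) =>
      f.hom (v ⊗ₜ ((1:ℂ) ⊗ₜ[ℂ] (1:ℂ)))) (Y.2.monoidal (𝟙_ CC) (𝟙_ CC))
  have hnat := congrArg
    (fun (f : Y.1 ⊗ (𝟙_ CC ⊗ 𝟙_ CC) ⟶ 𝟙_ CC ⊗ Y.1) =>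
      f.hom (v ⊗ₜ ((1:ℂ) ⊗ₜ[ℂ] (1:ℂ)))) (Y.2.naturality (λ_ (𝟙_ CC)).hom)
  simp only at hmon hnat
  have hrhs :
      ((α_ (𝟙_ CC) (𝟙_ CC) Y.1).inv.hom
        ((𝟙_ CC ◁ (Y.2.β (𝟙_ CC)).hom).hom
          ((α_ (𝟙_ CC) Y.1 (𝟙_ CC)).hom.hom
            (((Y.2.β (𝟙_ CC)).hom ▷ 𝟙_ CC).hom
              ((α_ Y.1 (𝟙_ CC) (𝟙_ CC)).inv.hom (v ⊗ₜ ((1:ℂ) ⊗ₜ[ℂ] (1:ℂ)))))))) =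
      ((1:ℂ) ⊗ₜ[ℂ] (1:ℂ)) ⊗ₜ[ℂ] LY Y (LY Y v) := by
    have e2 : ((Y.2.β (𝟙_ CC)).hom ▷ 𝟙_ CC).hom ((v ⊗ₜ[ℂ] (1:ℂ)) ⊗ₜ[ℂ] (1:ℂ))
        = ((Y.2.β (𝟙_ CC)).hom.hom (v ⊗ₜ[ℂ] (1:ℂ))) ⊗ₜ[ℂ] (1:ℂ) := rfl
    show (α_ (𝟙_ CC) (𝟙_ CC) Y.1).inv.hom
        ((𝟙_ CC ◁ (Y.2.β (𝟙_ CC)).hom).hom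
          ((α_ (𝟙_ CC) Y.1 (𝟙_ CC)).hom.hom
            (((Y.2.β (𝟙_ CC)).hom ▷ 𝟙_ CC).hom ((v ⊗ₜ[ℂ] (1:ℂ)) ⊗ₜ[ℂ] (1:ℂ))))) = _
    rw [e2, beta_unit_apply']
    have e3 : (α_ (𝟙_ CC) Y.1 (𝟙_ CC)).hom.hom
        ((((1:ℂ) ⊗ₜ[ℂ] LY Y v) : _) ⊗ₜ[ℂ] (1:ℂ))
        = (1:ℂ) ⊗ₜ[ℂ] ((LY Y v) ⊗ₜ[ℂ] (1:ℂ)) := rfl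
    rw [e3]
    have e4 : (𝟙_ CC ◁ (Y.2.β (𝟙_ CC)).hom).hom ((1:ℂ) ⊗ₜ[ℂ] ((LY Y v) ⊗ₜ[ℂ] (1:ℂ)))
        = (1:ℂ) ⊗ₜ[ℂ] ((Y.2.β (𝟙_ CC)).hom.hom ((LY Y v) ⊗ₜ[ℂ] (1:ℂ))) := rfl
    rw [e4, beta_unit_apply']
    rfl
  have hmon2 : (Y.2.β (𝟙_ CC ⊗ 𝟙_ CC)).hom.hom (v ⊗ₜ ((1:ℂ) ⊗ₜ[ℂ] (1:ℂ)))
      = ((1:ℂ) ⊗ₜ[ℂ] (1:ℂ)) ⊗ₜ[ℂ] LY Y (LY Y v) := hmon.trans hrhs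
  -- now the naturality equation
  have hlam : (λ_ (𝟙_ CC)).hom.hom ((1:ℂ) ⊗ₜ[ℂ] (1:ℂ)) = (1:ℂ) := by
    show (1:ℂ) • (1:ℂ) = 1; simp
  have hLHS : (Y.1 ◁ (λ_ (𝟙_ CC)).hom ≫ (Y.2.β (𝟙_ CC)).hom).hom (v ⊗ₜ ((1:ℂ) ⊗ₜ[ℂ] (1:ℂ)))
      = (1:ℂ) ⊗ₜ[ℂ] LY Y v := by
    rw [comp_hom_apply]
    have : (Y.1 ◁ (λ_ (𝟙_ CC)).hom).hom (v ⊗ₜ ((1:ℂ) ⊗ₜ[ℂ] (1:ℂ)))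
        = v ⊗ₜ[ℂ] (1:ℂ) := by
      show v ⊗ₜ[ℂ] ((λ_ (𝟙_ CC)).hom.hom ((1:ℂ) ⊗ₜ[ℂ] (1:ℂ))) = _
      rw [hlam]
    rw [this, beta_unit_apply']
  have hRHS : ((Y.2.β (𝟙_ CC ⊗ 𝟙_ CC)).hom ≫ (λ_ (𝟙_ CC)).hom ▷ Y.1).hom
        (v ⊗ₜ ((1:ℂ) ⊗ₜ[ℂ] (1:ℂ)))
      = (1:ℂ) ⊗ₜ[ℂ] LY Y (LY Y v) := by
    rw [comp_hom_apply, hmon2]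
    show ((λ_ (𝟙_ CC)).hom.hom ((1:ℂ) ⊗ₜ[ℂ] (1:ℂ))) ⊗ₜ[ℂ] LY Y (LY Y v) = _
    rw [hlam]
  have := hLHS.symm.trans (hnat.trans hRHS)
  have := congrArg (TensorProduct.lid ℂ Y.1.V) this
  simpa using this.symm

lemma LY_injective : Function.Injective (LY Y) :=
  (TensorProduct.lid ℂ Y.1.V).injective.comp
    ((beta_injective Y (𝟙_ CC)).comp (TensorProduct.rid ℂ Y.1.V).symm.injective)

lemma LY_eq_id (v : Y.1.V) : LY Y v = v := LY_injective Y (LY_idem Y v)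

lemma beta_unit_apply (v : Y.1.V) :
    (Y.2.β (𝟙_ CC)).hom.hom (v ⊗ₜ (1 : ℂ)) = (1 : ℂ) ⊗ₜ[ℂ] v := by
  rw [beta_unit_apply', LY_eq_id]

lemma g2_cases : ∀ x : G2, x = 1 ∨ x = gg := by decide

lemma tensor_ρ_apply (U U' : CC) (x : G2) (u : U.V) (u' : U'.V) :
    ((U ⊗ U').ρ x) (u ⊗ₜ u') = (U.ρ x u) ⊗ₜ[ℂ] (U'.ρ x u') := rfl

lemma pure_mul_comm (s : ℂ) (hs : s * s = 1) :
    (LinearMap.mul' ℂ ℂ).comp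
        (TensorProduct.map (s • (LinearMap.id : ℂ →ₗ[ℂ] ℂ)) (s • (LinearMap.id : ℂ →ₗ[ℂ] ℂ)))
      = LinearMap.mul' ℂ ℂ := by
  apply TensorProduct.ext'
  intro c c'
  simp only [LinearMap.comp_apply, TensorProduct.map_tmul, LinearMap.smul_apply,
    LinearMap.id_apply, smul_eq_mul, LinearMap.mul'_apply]
  calc (s * c) * (s * c') = (s * s) * (c * c') := by ring
    _ = c * c' := by rw [hs, one_mul]

/-- multiplication `sgn ⊗ sgn ⟶ 𝟙` as a morphism of representations -/
def mulHom : Xrep true ⊗ Xrep true ⟶ 𝟙_ CC where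
  hom := ObjectProperty.homMk (ModuleCat.ofHom (LinearMap.mul' ℂ ℂ))
  comm x := by apply FGModuleCat.hom_ext; exact pure_mul_comm (sgn true x) (sgn_sq true x)

lemma mulHom_apply (c c' : ℂ) :
    mulHom.hom (c ⊗ₜ c') = c * c' := rfl

lemma TY_TY (v : Y.1.V) : TY Y (TY Y v) = v := by
  have hmon := congrArg
    (fun (f : Y.1 ⊗ (Xrep true ⊗ Xrep true) ⟶ (Xrep true ⊗ Xrep true) ⊗ Y.1) =>
      f.hom (v ⊗ₜ ((1:ℂ) ⊗ₜ[ℂ] (1:ℂ)))) (Y.2.monoidal (Xrep true) (Xrep true))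
  have hnat := congrArg
    (fun (f : Y.1 ⊗ (Xrep true ⊗ Xrep true) ⟶ 𝟙_ CC ⊗ Y.1) =>
      f.hom (v ⊗ₜ ((1:ℂ) ⊗ₜ[ℂ] (1:ℂ)))) (Y.2.naturality mulHom)
  simp only at hmon hnat
  have hrhs :
      ((α_ (Xrep true) (Xrep true) Y.1).inv.hom
        ((Xrep true ◁ (Y.2.β (Xrep true)).hom).hom
          ((α_ (Xrep true) Y.1 (Xrep true)).hom.hom
            (((Y.2.β (Xrep true)).hom ▷ Xrep true).hom
              ((α_ Y.1 (Xrep true) (Xrep true)).inv.hom (v ⊗ₜ ((1:ℂ) ⊗ₜ[ℂ] (1:ℂ)))))))) =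
      ((1:ℂ) ⊗ₜ[ℂ] (1:ℂ)) ⊗ₜ[ℂ] TY Y (TY Y v) := by
    have e2 : ((Y.2.β (Xrep true)).hom ▷ Xrep true).hom ((v ⊗ₜ[ℂ] (1:ℂ)) ⊗ₜ[ℂ] (1:ℂ))
        = ((Y.2.β (Xrep true)).hom.hom (v ⊗ₜ[ℂ] (1:ℂ))) ⊗ₜ[ℂ] (1:ℂ) := rfl
    show (α_ (Xrep true) (Xrep true) Y.1).inv.hom
        ((Xrep true ◁ (Y.2.β (Xrep true)).hom).hom
          ((α_ (Xrep true) Y.1 (Xrep true)).hom.hom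
            (((Y.2.β (Xrep true)).hom ▷ Xrep true).hom ((v ⊗ₜ[ℂ] (1:ℂ)) ⊗ₜ[ℂ] (1:ℂ))))) = _
    rw [e2, beta_sgn_apply]
    have e3 : (α_ (Xrep true) Y.1 (Xrep true)).hom.hom
        ((((1:ℂ) ⊗ₜ[ℂ] TY Y v) : _) ⊗ₜ[ℂ] (1:ℂ))
        = (1:ℂ) ⊗ₜ[ℂ] ((TY Y v) ⊗ₜ[ℂ] (1:ℂ)) := rfl
    erw [e3]
    have e4 : (Xrep true ◁ (Y.2.β (Xrep true)).hom).hom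
        ((1:ℂ) ⊗ₜ[ℂ] ((TY Y v) ⊗ₜ[ℂ] (1:ℂ)))
        = (1:ℂ) ⊗ₜ[ℂ] ((Y.2.β (Xrep true)).hom.hom ((TY Y v) ⊗ₜ[ℂ] (1:ℂ))) := rfl
    erw [e4, beta_sgn_apply]
    rfl
  have hmon2 : (Y.2.β (Xrep true ⊗ Xrep true)).hom.hom (v ⊗ₜ ((1:ℂ) ⊗ₜ[ℂ] (1:ℂ)))
      = ((1:ℂ) ⊗ₜ[ℂ] (1:ℂ)) ⊗ₜ[ℂ] TY Y (TY Y v) := hmon.trans hrhs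
  have hLHS : (Y.1 ◁ mulHom ≫ (Y.2.β (𝟙_ CC)).hom).hom (v ⊗ₜ ((1:ℂ) ⊗ₜ[ℂ] (1:ℂ)))
      = (1:ℂ) ⊗ₜ[ℂ] v := by
    rw [comp_hom_apply]
    have : (Y.1 ◁ mulHom).hom (v ⊗ₜ ((1:ℂ) ⊗ₜ[ℂ] (1:ℂ))) = v ⊗ₜ[ℂ] (1:ℂ) := by
      show v ⊗ₜ[ℂ] (mulHom.hom ((1:ℂ) ⊗ₜ[ℂ] (1:ℂ))) = _
      rw [mulHom_apply, mul_one]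
    rw [this, beta_unit_apply]
  have hRHS : ((Y.2.β (Xrep true ⊗ Xrep true)).hom ≫ mulHom ▷ Y.1).hom
        (v ⊗ₜ ((1:ℂ) ⊗ₜ[ℂ] (1:ℂ)))
      = (1:ℂ) ⊗ₜ[ℂ] TY Y (TY Y v) := by
    rw [comp_hom_apply, hmon2]
    show (mulHom.hom ((1:ℂ) ⊗ₜ[ℂ] (1:ℂ))) ⊗ₜ[ℂ] TY Y (TY Y v) = _
    rw [mulHom_apply, mul_one]
  have := hLHS.symm.trans (hnat.trans hRHS)
  have := congrArg (TensorProduct.lid ℂ Y.1.V) this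
  simpa using this.symm

lemma TY_sig (v : Y.1.V) : TY Y (Y.1.ρ gg v) = Y.1.ρ gg (TY Y v) := by
  have h := ρ_hom_comm_apply (Y.2.β (Xrep true)).hom gg (v ⊗ₜ (1:ℂ))
  have hone : (Xrep true).ρ gg (1:ℂ) = -(1:ℂ) := by
    rw [Xrep_ρ, sgn_gg]; norm_num; rfl
  have hl : ((Y.1 ⊗ Xrep true).ρ gg) (v ⊗ₜ (1:ℂ)) = -((Y.1.ρ gg v) ⊗ₜ[ℂ] (1:ℂ)) := by
    erw [tensor_ρ_apply, hone, TensorProduct.tmul_neg]; rfl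
  have hr : ((Xrep true ⊗ Y.1).ρ gg) ((1:ℂ) ⊗ₜ[ℂ] TY Y v)
      = -((1:ℂ) ⊗ₜ[ℂ] (Y.1.ρ gg (TY Y v))) := by
    erw [tensor_ρ_apply, hone, TensorProduct.neg_tmul]; rfl
  erw [hl, map_neg, beta_sgn_apply, beta_sgn_apply, hr] at h
  have h2 := neg_injective h
  have := congrArg (TensorProduct.lid ℂ Y.1.V) h2
  simpa using this

/-- the action as a linear map on the `FGModuleCat` carrier -/
def rh (U : CC) (x : G2) : U.V →ₗ[ℂ] U.V := FDRep.ρ U x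

lemma rh_rh (U : CC) (u : U.V) : rh U gg (rh U gg u) = u := tau_tau U u
lemma rh_one (U : CC) (u : U.V) : rh U 1 u = u := by
  show FDRep.ρ U 1 u = u
  rw [map_one, Module.End.one_apply]

/-- a `g`-invariant vector gives a morphism from the trivial rep -/
def unitTo (U : CC) (u : U.V) (hu : rh U gg u = u) : 𝟙_ CC ⟶ U where
  hom := ObjectProperty.homMk (ModuleCat.ofHom (LinearMap.toSpanSingleton ℂ U.V u))
  comm x := by
    apply FGModuleCat.hom_ext
    apply LinearMap.ext
    intro c
    show c • u = rh U x (c • u)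
    rw [map_smul]
    rcases g2_cases x with h | h <;> rw [h]
    · rw [rh_one]
    · rw [hu]

lemma unitTo_apply (U : CC) (u : U.V) (hu : rh U gg u = u) (c : ℂ) :
    (unitTo U u hu).hom c = c • u := rfl

/-- a `g`-antiinvariant vector gives a morphism from the sign rep -/
def sgnTo (U : CC) (u : U.V) (hu : rh U gg u = -u) : Xrep true ⟶ U where
  hom := ObjectProperty.homMk (ModuleCat.ofHom (LinearMap.toSpanSingleton ℂ U.V u))
  comm x := by
    apply FGModuleCat.hom_ext
    apply LinearMap.ext
    intro c
    show (sgn true x * (id c : ℂ)) • u = rh U x ((id c : ℂ) • u)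
    rw [map_smul]
    rcases g2_cases x with h | h <;> rw [h]
    · rw [rh_one, sgn_one, one_mul]
    · rw [hu, sgn_gg]
      simp only [if_pos trivial, smul_neg]
      rw [← smul_smul]
      rw [neg_one_smul]

lemma sgnTo_apply (U : CC) (u : U.V) (hu : rh U gg u = -u) (c : ℂ) :
    (sgnTo U u hu).hom c = c • u := rfl

/-- The master formula: the half-braiding of any central object is determined by `TY`. -/
lemma beta_formula (U : CC) (v : Y.1.V) (u : U.V) :
    (Y.2.β U).hom.hom (v ⊗ₜ u) =
      (((1:ℂ)/2) • (u + rh U gg u)) ⊗ₜ[ℂ] v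
        + (((1:ℂ)/2) • (u - rh U gg u)) ⊗ₜ[ℂ] TY Y v := by
  set uP : U.V := ((1:ℂ)/2) • (u + rh U gg u) with huP
  set uM : U.V := ((1:ℂ)/2) • (u - rh U gg u) with huM
  have hP : rh U gg uP = uP := by
    rw [huP, map_smul, map_add, rh_rh, add_comm]
  have hM : rh U gg uM = -uM := by
    rw [huM, map_smul, map_sub, rh_rh, ← smul_neg, neg_sub]
  have hsum : uP + uM = u := by
    rw [huP, huM]
    module
  have h1 : (Y.2.β U).hom.hom (v ⊗ₜ uP) = uP ⊗ₜ[ℂ] v := by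
    have hnat := congrArg (fun (f : Y.1 ⊗ 𝟙_ CC ⟶ U ⊗ Y.1) => f.hom (v ⊗ₜ (1:ℂ)))
      (Y.2.naturality (unitTo U uP hP))
    simp only at hnat
    have hL : (Y.1 ◁ unitTo U uP hP ≫ (Y.2.β U).hom).hom (v ⊗ₜ (1:ℂ))
        = (Y.2.β U).hom.hom (v ⊗ₜ uP) := by
      rw [comp_hom_apply]
      congr 1
      show v ⊗ₜ[ℂ] ((unitTo U uP hP).hom (1:ℂ)) = v ⊗ₜ[ℂ] uP
      rw [unitTo_apply, one_smul]
    have hR : ((Y.2.β (𝟙_ CC)).hom ≫ unitTo U uP hP ▷ Y.1).hom (v ⊗ₜ (1:ℂ))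
        = uP ⊗ₜ[ℂ] v := by
      rw [comp_hom_apply, beta_unit_apply]
      show ((unitTo U uP hP).hom (1:ℂ)) ⊗ₜ[ℂ] v = _
      rw [unitTo_apply, one_smul]
    rw [← hL, hnat, hR]
  have h2 : (Y.2.β U).hom.hom (v ⊗ₜ uM) = uM ⊗ₜ[ℂ] TY Y v := by
    have hnat := congrArg (fun (f : Y.1 ⊗ Xrep true ⟶ U ⊗ Y.1) => f.hom (v ⊗ₜ (1:ℂ)))
      (Y.2.naturality (sgnTo U uM hM))
    simp only at hnat
    have hL : (Y.1 ◁ sgnTo U uM hM ≫ (Y.2.β U).hom).hom (v ⊗ₜ (1:ℂ))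
        = (Y.2.β U).hom.hom (v ⊗ₜ uM) := by
      rw [comp_hom_apply]
      congr 1
      show v ⊗ₜ[ℂ] ((sgnTo U uM hM).hom (1:ℂ)) = v ⊗ₜ[ℂ] uM
      rw [sgnTo_apply, one_smul]
    have hR : ((Y.2.β (Xrep true)).hom ≫ sgnTo U uM hM ▷ Y.1).hom (v ⊗ₜ (1:ℂ))
        = uM ⊗ₜ[ℂ] TY Y v := by
      rw [comp_hom_apply, beta_sgn_apply]
      show ((sgnTo U uM hM).hom (1:ℂ)) ⊗ₜ[ℂ] TY Y v = _
      rw [sgnTo_apply, one_smul]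
    rw [← hL, hnat, hR]
  calc (Y.2.β U).hom.hom (v ⊗ₜ u)
      = (Y.2.β U).hom.hom (v ⊗ₜ (uP + uM)) := by rw [hsum]
    _ = (Y.2.β U).hom.hom (v ⊗ₜ uP) + (Y.2.β U).hom.hom (v ⊗ₜ uM) := by
        rw [TensorProduct.tmul_add, map_add]
    _ = uP ⊗ₜ[ℂ] v + uM ⊗ₜ[ℂ] TY Y v := by rw [h1, h2]

lemma tw_eq_rh (U : CC) (u : U.V) : tw true U u = rh U gg u := rfl
lemma tw_false (U : CC) (u : U.V) : tw false U u = u := rfl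

lemma whiskerR_hom_apply {A B : CC} (h : A ⟶ B) (W : CC) (x : A.V) (w' : W.V) :
    (h ▷ W).hom (x ⊗ₜ w') = h.hom x ⊗ₜ[ℂ] w' := rfl
lemma whiskerL_hom_apply (W : CC) {A B : CC} (h : A ⟶ B) (w' : W.V) (x : A.V) :
    (W ◁ h).hom (w' ⊗ₜ x) = w' ⊗ₜ[ℂ] h.hom x := rfl

/-- A joint eigenvector of the action and of `TY` gives a morphism from `Xobj a b`. -/
def mkFromX (a b : Bool) (w : Y.1.V) (hw1 : rh Y.1 gg w = sgn a gg • w)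
    (hw2 : TY Y w = sgn b gg • w) : Xobj a b ⟶ Y where
  f := { hom := ObjectProperty.homMk (ModuleCat.ofHom (LinearMap.toSpanSingleton ℂ Y.1.V w))
         comm := fun x => by
           apply FGModuleCat.hom_ext
           apply LinearMap.ext
           intro c
           show (sgn a x * (id c : ℂ)) • w = rh Y.1 x ((id c : ℂ) • w)
           rw [map_smul]
           rcases g2_cases x with h | h <;> rw [h]
           · rw [rh_one, sgn_one, one_mul]
           · rw [hw1]
             module }
  comm U := by
    apply Action.Hom.ext
    apply FGModuleCat.hom_ext
    refine TensorProduct.ext' (R := ℂ) (M := ℂ) (N := U.V)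
      (P₂ := TensorProduct ℂ U.V Y.1.V) ?_
    intro c u
    show (Y.2.β U).hom.hom ((LinearMap.toSpanSingleton ℂ Y.1.V w c) ⊗ₜ u)
      = (tw b U u) ⊗ₜ[ℂ] (LinearMap.toSpanSingleton ℂ Y.1.V w c)
    have key : (((1:ℂ)/2) • (u + rh U gg u)) ⊗ₜ[ℂ] w
        + sgn b gg • ((((1:ℂ)/2) • (u - rh U gg u)) ⊗ₜ[ℂ] w)
        = (tw b U u) ⊗ₜ[ℂ] w := by
      cases b
      · rw [tw_false, sgn_gg]
        simp only [Bool.false_eq_true, if_false, one_smul]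
        rw [← TensorProduct.add_tmul]
        congr 1
        module
      · rw [tw_eq_rh, sgn_gg, if_pos rfl, neg_one_smul, ← sub_eq_add_neg, ← TensorProduct.sub_tmul]
        congr 1
        module
    rw [LinearMap.toSpanSingleton_apply, beta_formula, LinearMap.map_smul, hw2]
    simp only [TensorProduct.tmul_smul]
    rw [← smul_add]
    exact congrArg (fun z => c • z) key

lemma mkFromX_f_apply (a b : Bool) (w : Y.1.V) (hw1 : rh Y.1 gg w = sgn a gg • w)
    (hw2 : TY Y w = sgn b gg • w) (c : ℂ) :
    (mkFromX Y a b w hw1 hw2).f.hom c = c • w := rfl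

lemma sgn_false (x : G2) : sgn false x = 1 := by simp [sgn]
lemma sgn_true_gg : sgn true gg = -1 := by
  simp [sgn, gg]

lemma TY_rh (v : Y.1.V) : TY Y (rh Y.1 gg v) = rh Y.1 gg (TY Y v) := TY_sig Y v

/-- projection to the `sgn a`-eigenspace of the action -/
def pP (a : Bool) (v : Y.1.V) : Y.1.V := ((1:ℂ)/2) • (v + sgn a gg • rh Y.1 gg v)

lemma pP_eigen (a : Bool) (v : Y.1.V) :
    rh Y.1 gg (pP Y a v) = sgn a gg • pP Y a v := by
  cases a <;> simp only [pP, sgn_false, sgn_true_gg] <;>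
    rw [map_smul, map_add, map_smul, rh_rh] <;> module

lemma pP_sum (v : Y.1.V) : pP Y false v + pP Y true v = v := by
  simp only [pP, sgn_false, sgn_true_gg]
  module

/-- projection to the `sgn b`-eigenspace of `TY` -/
def qQ (b : Bool) (v : Y.1.V) : Y.1.V := ((1:ℂ)/2) • (v + sgn b gg • TY Y v)

lemma qQ_eigen (b : Bool) (v : Y.1.V) :
    TY Y (qQ Y b v) = sgn b gg • qQ Y b v := by
  cases b <;> simp only [qQ, sgn_false, sgn_true_gg] <;>
    rw [map_smul, map_add, map_smul, TY_TY] <;> module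

lemma qQ_sum (v : Y.1.V) : qQ Y false v + qQ Y true v = v := by
  simp only [qQ, sgn_false, sgn_true_gg]
  module

lemma qQ_rh_eigen (a b : Bool) (v : Y.1.V) (h : rh Y.1 gg v = sgn a gg • v) :
    rh Y.1 gg (qQ Y b v) = sgn a gg • qQ Y b v := by
  have hcomm : rh Y.1 gg (qQ Y b v) = qQ Y b (rh Y.1 gg v) := by
    simp only [qQ]
    rw [map_smul, map_add, map_smul, ← TY_rh]
  rw [hcomm, h]
  simp only [qQ]
  rw [map_smul]
  module

lemma exists_eigen (v : Y.1.V) (hv : v ≠ 0) :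
    ∃ (a b : Bool) (w : Y.1.V), w ≠ 0 ∧ rh Y.1 gg w = sgn a gg • w ∧
      TY Y w = sgn b gg • w := by
  obtain ⟨a, ha⟩ : ∃ a, pP Y a v ≠ 0 := by
    by_contra hc
    push_neg at hc
    exact hv (by rw [← pP_sum Y v, hc false, hc true, add_zero])
  obtain ⟨b, hb⟩ : ∃ b, qQ Y b (pP Y a v) ≠ 0 := by
    by_contra hc
    push_neg at hc
    exact ha (by rw [← qQ_sum Y (pP Y a v), hc false, hc true, add_zero])
  exact ⟨a, b, qQ Y b (pP Y a v), hb,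
    qQ_rh_eigen Y a b _ (pP_eigen Y a v), qQ_eigen Y b _⟩

lemma center_zero_f_hom {A B : Center CC} : (0 : A ⟶ B).f.hom = 0 := by
  rw [show (0 : A ⟶ B).f = (0 : A.1 ⟶ B.1) from rfl]
  exact Action.zero_hom

lemma center_mono {A B : Center CC} (f : A ⟶ B) (hf : Function.Injective f.f.hom) :
    Mono f := by
  constructor
  intro Z u v huv
  apply Center.ext
  apply Action.Hom.ext
  apply FGModuleCat.hom_ext
  apply LinearMap.ext
  intro z
  exact hf (congrArg (fun (m : Z ⟶ B) => m.f.hom z) huv)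

lemma simple_iso_some [Simple Y] : ∃ a b : Bool, Nonempty (Y ≅ Xobj a b) := by
  obtain ⟨v, hv⟩ : ∃ v : Y.1.V, v ≠ 0 := by
    by_contra hc
    push_neg at hc
    have hid : 𝟙 Y = 0 := by
      apply Center.ext
      apply Action.Hom.ext
      apply FGModuleCat.hom_ext
      apply LinearMap.ext
      intro z
      rw [center_zero_f_hom]
      show _ = (0 : Y.1.V)
      exact hc _
    exact CategoryTheory.id_nonzero Y hid
  obtain ⟨a, b, w, hw, h1, h2⟩ := exists_eigen Y v hv
  let h : Xobj a b ⟶ Y := mkFromX Y a b w h1 h2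
  have hmono : Mono h := center_mono h (by
    show Function.Injective (LinearMap.toSpanSingleton ℂ Y.1.V w)
    intro c c' hcc
    exact smul_left_injective ℂ hw hcc)
  have hne : h ≠ 0 := by
    intro h0
    apply hw
    have := congrArg (fun (m : Xobj a b ⟶ Y) => m.f.hom (1:ℂ)) h0
    simp only at this
    rw [mkFromX_f_apply, center_zero_f_hom] at this
    rw [← one_smul ℂ w]
    exact this.trans (LinearMap.zero_apply _)
  have : IsIso h := (Simple.mono_isIso_iff_nonzero h).mpr hne
  exact ⟨a, b, ⟨(asIso h).symm⟩⟩

lemma id_ne_zero (a b : Bool) : (𝟙 (Xobj a b) : Xobj a b ⟶ Xobj a b) ≠ 0 := by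
  intro h0
  have h := congrArg (fun m : Xobj a b ⟶ Xobj a b => m.f.hom (1:ℂ)) h0
  simp only at h
  rw [center_zero_f_hom] at h
  exact one_ne_zero (α := ℂ) h

variable {Z : Center CC}

lemma tw_sgnrep_one (b : Bool) : tw b (Xrep true) (1:ℂ) = (sgn b gg : ℂ) := by
  cases b
  · rw [sgn_false]; rfl
  · rw [sgn_true_gg]
    show (Xrep true).ρ gg (1:ℂ) = (-1 : ℂ)
    rw [Xrep_ρ, sgn_true_gg, mul_one]

lemma f_TY (a b : Bool) (f : Z ⟶ Xobj a b) (z : Z.1.V) :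
    f.f.hom (TY Z z) = sgn b gg • f.f.hom z := by
  have hc := congrArg
    (fun (m : Z.1 ⊗ Xrep true ⟶ Xrep true ⊗ (Xobj a b).1) => m.hom (z ⊗ₜ (1:ℂ)))
    (f.comm (Xrep true))
  simp only at hc
  have hL : ((f.f ▷ Xrep true) ≫ ((Xobj a b).2.β (Xrep true)).hom).hom (z ⊗ₜ (1:ℂ))
      = (sgn b gg : ℂ) ⊗ₜ[ℂ] f.f.hom z := by
    erw [comp_hom_apply, whiskerR_hom_apply, Xobj_β_apply, tw_sgnrep_one]; rfl
  have hR : ((Z.2.β (Xrep true)).hom ≫ (Xrep true ◁ f.f)).hom (z ⊗ₜ (1:ℂ))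
      = (1:ℂ) ⊗ₜ[ℂ] f.f.hom (TY Z z) := by
    erw [comp_hom_apply, beta_sgn_apply, whiskerL_hom_apply]; rfl
  rw [hL, hR] at hc
  have := congrArg (TensorProduct.lid ℂ ((Xrep a).V)) hc
  erw [TensorProduct.lid_tmul, TensorProduct.lid_tmul, one_smul] at this
  exact this.symm

lemma f_rh (a b : Bool) (f : Z ⟶ Xobj a b) (z : Z.1.V) :
    f.f.hom (rh Z.1 gg z) = sgn a gg • f.f.hom z := by
  exact ρ_hom_comm_apply f.f gg z

lemma f_pP (a b : Bool) (f : Z ⟶ Xobj a b) (z : Z.1.V) :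
    f.f.hom (pP Z a z) = f.f.hom z := by
  show f.f.hom (((1:ℂ)/2) • (z + sgn a gg • rh Z.1 gg z)) = f.f.hom z
  rw [map_smul, map_add, map_smul, f_rh a b f z, smul_smul, sgn_sq, one_smul]
  module

lemma f_qQ (a b : Bool) (f : Z ⟶ Xobj a b) (z : Z.1.V) :
    f.f.hom (qQ Z b z) = f.f.hom z := by
  show f.f.hom (((1:ℂ)/2) • (z + sgn b gg • TY Z z)) = f.f.hom z
  rw [map_smul, map_add, map_smul, f_TY a b f z, smul_smul, sgn_sq, one_smul]
  module

instance simple_Xobj (a b : Bool) : Simple (Xobj a b) := by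
  constructor
  intro Z f hmono
  constructor
  · intro hiso h0
    have h2 : inv f ≫ f = 𝟙 (Xobj a b) := IsIso.inv_hom_id f
    nth_rewrite 2 [h0] at h2
    rw [comp_zero] at h2
    exact id_ne_zero a b h2.symm
  · intro hne
    obtain ⟨z0, hz0⟩ : ∃ z : Z.1.V, f.f.hom z ≠ 0 := by
      by_contra hc
      push_neg at hc
      apply hne
      apply Center.ext
      apply Action.Hom.ext
      apply FGModuleCat.hom_ext
      apply LinearMap.ext
      intro z
      rw [center_zero_f_hom]
      show _ = (0 : (Xobj a b).1.V)
      exact hc z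
    obtain ⟨t, ht⟩ : ∃ t : ℂ, f.f.hom z0 = t := ⟨f.f.hom z0, rfl⟩
    have htne : t ≠ 0 := by rw [← ht]; exact hz0
    set z1 : Z.1.V := t⁻¹ • z0 with hz1
    have hfz1 : f.f.hom z1 = (1 : ℂ) := by
      rw [hz1, map_smul, ht]
      show (t⁻¹ * t : ℂ) = 1
      exact inv_mul_cancel₀ htne
    set w : Z.1.V := qQ Z b (pP Z a z1) with hwdef
    have hw1 : rh Z.1 gg w = sgn a gg • w := qQ_rh_eigen Z a b _ (pP_eigen Z a z1)
    have hw2 : TY Z w = sgn b gg • w := qQ_eigen Z b _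
    have hfw : f.f.hom w = (1 : ℂ) := by
      rw [hwdef, f_qQ a b f, f_pP a b f, hfz1]
    let s : Xobj a b ⟶ Z := mkFromX Z a b w hw1 hw2
    have hsec : s ≫ f = 𝟙 (Xobj a b) := by
      apply Center.ext
      apply Action.Hom.ext
      apply FGModuleCat.hom_ext
      apply LinearMap.ext
      intro c
      show f.f.hom ((id c : ℂ) • w) = (id c : ℂ)
      rw [map_smul, hfw]; exact mul_one (id c : ℂ)
    have : IsSplitEpi f := IsSplitEpi.mk' ⟨s, hsec⟩
    exact isIso_of_mono_of_isSplitEpi f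

lemma TY_Xobj (a b : Bool) (z : (Xrep a).V) :
    TY (Xobj a b) z = sgn b gg • z := by
  have h1 := beta_sgn_apply (Xobj a b) z
  have h2 : ((Xobj a b).2.β (Xrep true)).hom.hom (z ⊗ₜ (1:ℂ))
      = (sgn b gg : ℂ) ⊗ₜ[ℂ] z := by
    erw [Xobj_β_apply, tw_sgnrep_one]; rfl
  rw [h2] at h1
  have := congrArg (TensorProduct.lid ℂ ((Xrep a).V)) h1
  erw [TensorProduct.lid_tmul, TensorProduct.lid_tmul, one_smul] at this
  exact this.symm

lemma iso_eq {a b a' b' : Bool} (e : Xobj a b ≅ Xobj a' b') : a = a' ∧ b = b' := by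
  obtain ⟨c, hc⟩ : ∃ c : ℂ, e.hom.f.hom (1:ℂ) = c := ⟨_, rfl⟩
  have hcne : c ≠ 0 := by
    intro h0
    have h' : e.inv.f.hom (e.hom.f.hom (1:ℂ)) = (1:ℂ) :=
      congrArg (fun m : Xobj a b ⟶ Xobj a b => m.f.hom (1:ℂ)) e.hom_inv_id
    rw [hc, h0] at h'
    have hz : e.inv.f.hom (0:ℂ) = (0:ℂ) := map_zero _
    rw [hz] at h'
    exact one_ne_zero (α := ℂ) h'.symm
  have ha : sgn a gg = sgn a' gg := by
    have h := ρ_hom_comm_apply e.hom.f gg (1:ℂ)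
    have l : (Xobj a b).1.ρ gg (1:ℂ) = sgn a gg • (1:ℂ) := by
      show sgn a gg * 1 = sgn a gg • (1:ℂ)
      rw [mul_one]
      exact (mul_one (sgn a gg)).symm
    have l' : (Xobj a' b').1.ρ gg c = sgn a' gg * c := Xrep_ρ a' gg c
    erw [l, map_smul, hc, l'] at h
    change sgn a gg * c = _ at h
    exact mul_right_cancel₀ hcne h
  have hb : sgn b gg = sgn b' gg := by
    have h := f_TY a' b' e.hom (1:ℂ)
    erw [TY_Xobj, map_smul, hc] at h
    change sgn b gg * c = sgn b' gg * c at h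
    exact mul_right_cancel₀ hcne h
  constructor
  · cases a <;> cases a' <;> first
      | rfl
      | (exfalso; rw [sgn_false, sgn_true_gg] at ha; norm_num at ha)
      | (exfalso; rw [sgn_true_gg, sgn_false] at ha; norm_num at ha)
  · cases b <;> cases b' <;> first
      | rfl
      | (exfalso; rw [sgn_false, sgn_true_gg] at hb; norm_num at hb)
      | (exfalso; rw [sgn_true_gg, sgn_false] at hb; norm_num at hb)

lemma isEmpty_iso {a b a' b' : Bool} (h : ¬(a = a' ∧ b = b')) :
    IsEmpty (Xobj a b ≅ Xobj a' b') :=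
  ⟨fun e => h (iso_eq e)⟩

end
end ToricAux

open ToricAux in
/-- The Drinfeld center of `FDRep ℂ (ℤ/2)` has exactly four isomorphism classes of simple
objects: the sectors `𝟙, e, m, f` of `ℤ₂`-symmetric operators (the toric code anyons). -/
theorem center_fdRep_zmod_two_four_simples :
    ∃ X₀ X₁ X₂ X₃ : Center (FDRep ℂ (Multiplicative (ZMod 2))),
      Simple X₀ ∧ Simple X₁ ∧ Simple X₂ ∧ Simple X₃ ∧
      IsEmpty (X₀ ≅ X₁) ∧ IsEmpty (X₀ ≅ X₂) ∧ IsEmpty (X₀ ≅ X₃) ∧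
      IsEmpty (X₁ ≅ X₂) ∧ IsEmpty (X₁ ≅ X₃) ∧ IsEmpty (X₂ ≅ X₃) ∧
      ∀ Y : Center (FDRep ℂ (Multiplicative (ZMod 2))), Simple Y →
        (Nonempty (Y ≅ X₀) ∨ Nonempty (Y ≅ X₁) ∨ Nonempty (Y ≅ X₂) ∨
          Nonempty (Y ≅ X₃)) := by
  refine ⟨Xobj false false, Xobj true false, Xobj false true, Xobj true true,
    simple_Xobj false false, simple_Xobj true false, simple_Xobj false true,
    simple_Xobj true true,
    isEmpty_iso (by simp), isEmpty_iso (by simp), isEmpty_iso (by simp),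
    isEmpty_iso (by simp), isEmpty_iso (by simp), isEmpty_iso (by simp), ?_⟩
  intro Y hY
  haveI := hY
  obtain ⟨a, b, ⟨e⟩⟩ := simple_iso_some Y
  cases a <;> cases b
  · exact Or.inl ⟨e⟩
  · exact Or.inr (Or.inr (Or.inl ⟨e⟩))
  · exact Or.inr (Or.inl ⟨e⟩)
  · exact Or.inr (Or.inr (Or.inr ⟨e⟩))
end
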